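/- (Lemma 4.3, second estimate.) Assume in addition that there is w : [0,T] → V with v(t) = j(w(t)) for all t ∈ [0,T]. Then for all t ∈ (0,T) and all s ∈ (−T,T) with t+s ∈ (0,T): ‖v(t+s) − v(t)‖²_H ≤ √|s| · ‖w(t+s) − w(t)‖_V · (∫_I ‖g(τ)‖²_{V'} dτ)^{1/2}, where I is the interval with endpoints t and t+s. -/

import Mathlib

open MeasureTheory Set Filter

/-! Testing the weak-derivative identity with `φ = w b - w a` turns `‖v b - v a‖²` into
`∫_a^b ⟨g τ, φ⟩ dτ ≤ ‖φ‖ ∫_a^b ‖g τ‖`, and Cauchy–Schwarz against the constant `1` bounds the last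
integral by `√(b - a) (∫_a^b ‖g τ‖²)^(1/2)`. -/

section

variable {α : Type*} [MeasurableSpace α] {μ : Measure α}

theorem integral_norm_le_sqrt_measureReal_mul {E : Type*} [NormedAddCommGroup E] [IsFiniteMeasure μ]
    {f : α → E} (hf : MemLp f 2 μ) :
    ∫ x, ‖f x‖ ∂μ ≤ √(μ.real univ) * (∫ x, ‖f x‖ ^ 2 ∂μ) ^ ((1:ℝ)/2) := by
  have h := integral_mul_le_Lp_mul_Lq_of_nonneg (μ := μ) Real.HolderConjugate.two_two
    (f := fun _ => (1:ℝ)) (g := fun x => ‖f x‖) (Eventually.of_forall fun _ => zero_le_one)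
    (Eventually.of_forall fun _ => norm_nonneg _) (by simpa using memLp_const (1:ℝ))
    (by simpa using hf.norm)
  simpa [Real.sqrt_eq_rpow] using h

theorem integral_apply_le_integral_norm_mul {V : Type*} [NormedAddCommGroup V] [NormedSpace ℝ V]
    {g : α → StrongDual ℝ V} (hg : Integrable g μ) (φ : V) :
    ∫ x, g x φ ∂μ ≤ (∫ x, ‖g x‖ ∂μ) * ‖φ‖ := by
  rw [← integral_mul_const]
  exact integral_mono (hg.apply_continuousLinearMap φ) (hg.norm.mul_const _)
    fun x => (le_abs_self _).trans ((g x).le_opNorm φ)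

end

theorem setIntegral_Ioo_apply_le {V : Type*} [NormedAddCommGroup V] [NormedSpace ℝ V]
    {g : ℝ → StrongDual ℝ V} {a b : ℝ} (hab : a ≤ b) (hg : MemLp g 2 (volume.restrict (Ioo a b)))
    (φ : V) :
    ∫ τ in Ioo a b, g τ φ ≤ √(b - a) * ‖φ‖ * (∫ τ in Ioc a b, ‖g τ‖ ^ 2) ^ ((1:ℝ)/2) := by
  have hvol : volume.real (Ioo a b) = b - a := by simp [hab]
  calc ∫ τ in Ioo a b, g τ φ ≤ (∫ τ in Ioo a b, ‖g τ‖) * ‖φ‖ :=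
        integral_apply_le_integral_norm_mul (hg.integrable one_le_two) φ
    _ ≤ (√(b - a) * (∫ τ in Ioo a b, ‖g τ‖ ^ 2) ^ ((1:ℝ)/2)) * ‖φ‖ := by
        gcongr
        simpa [hvol] using integral_norm_le_sqrt_measureReal_mul hg
    _ = _ := by rw [integral_Ioc_eq_integral_Ioo]; ring

theorem norm_sub_sq_le_of_hasWeakDeriv {V H : Type*} [NormedAddCommGroup V] [NormedSpace ℝ V]
    [NormedAddCommGroup H] [InnerProductSpace ℝ H] (j : V →L[ℝ] H) {T : ℝ} {v : ℝ → H}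
    {g : ℝ → StrongDual ℝ V} (hg : MemLp g 2 ((volume : Measure ℝ).restrict (Ioo 0 T)))
    (hweak : ∀ (φ : V) (t₁ t₂ : ℝ), 0 ≤ t₁ → t₁ ≤ t₂ → t₂ ≤ T →
      (inner ℝ (v t₂ - v t₁) (j φ) : ℝ) = ∫ τ in Ioo t₁ t₂, g τ φ)
    {w : ℝ → V} (hv : ∀ t ∈ Icc (0:ℝ) T, v t = j (w t)) {a b : ℝ} (ha : 0 ≤ a) (hab : a ≤ b)
    (hb : b ≤ T) :
    ‖v b - v a‖ ^ 2 ≤ √(b - a) * ‖w b - w a‖ * (∫ τ in Ioc a b, ‖g τ‖ ^ 2) ^ ((1:ℝ)/2) := by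
  have hj : v b - v a = j (w b - w a) := by
    rw [hv b ⟨ha.trans hab, hb⟩, hv a ⟨ha, hab.trans hb⟩, map_sub]
  have hg' : MemLp g 2 (volume.restrict (Ioo a b)) :=
    hg.mono_measure (Measure.restrict_mono (Ioo_subset_Ioo ha hb) le_rfl)
  calc ‖v b - v a‖ ^ 2 = inner ℝ (v b - v a) (j (w b - w a)) := by
        rw [← hj, real_inner_self_eq_norm_sq]
    _ = ∫ τ in Ioo a b, g τ (w b - w a) := hweak _ a b ha hab hb
    _ ≤ _ := setIntegral_Ioo_apply_le hab hg' _

theorem nikolskii_estimate_gelfand_triple_squared_general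
    -- the Gelfand triple `(V, H, V')`
    {V H : Type*} [NormedAddCommGroup V] [InnerProductSpace ℝ V]
    [NormedAddCommGroup H] [InnerProductSpace ℝ H]
    (j : V →L[ℝ] H)
    (T : ℝ)
    (v : ℝ → H) (g : ℝ → StrongDual ℝ V)
    -- `g ∈ L²((0,T), V')`
    (hg : MemLp g 2 ((volume : Measure ℝ).restrict (Ioo 0 T)))
    -- `v ∈ H¹((0,T),V')` with weak time derivative `g`:
    (hweak : ∀ (φ : V) (t₁ t₂ : ℝ), 0 ≤ t₁ → t₁ ≤ t₂ → t₂ ≤ T →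
      (inner ℝ (v t₂ - v t₁) (j φ) : ℝ) = ∫ τ in Ioo t₁ t₂, g τ φ)
    -- `v` takes values in (the image of) `V`:
    (w : ℝ → V) (hv : ∀ t ∈ Icc (0:ℝ) T, v t = j (w t)) :
    ∀ t ∈ Ioo (0:ℝ) T, ∀ s : ℝ, -T < s → s < T → t + s ∈ Ioo (0:ℝ) T →
      ‖v (t + s) - v t‖^2 ≤
        Real.sqrt |s| * ‖w (t + s) - w t‖ * (∫ τ in uIoc t (t + s), ‖g τ‖^2) ^ ((1:ℝ)/2) := by
  intro t ht s _ _ hts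
  rcases le_or_gt 0 s with hs | hs
  · rw [uIoc_of_le (by linarith), abs_of_nonneg hs]
    simpa using norm_sub_sq_le_of_hasWeakDeriv j hg hweak hv ht.1.le (by linarith) hts.2.le
  · rw [uIoc_of_ge (by linarith), abs_of_neg hs, norm_sub_rev (v _), norm_sub_rev (w _)]
    simpa using norm_sub_sq_le_of_hasWeakDeriv j hg hweak hv hts.1.le (by linarith) ht.2.le

/-- Lemma 4.3, second estimate. -/
theorem nikolskii_estimate_gelfand_triple_squared
    -- the Gelfand triple `(V, H, V')`
    {V H : Type*} [NormedAddCommGroup V] [InnerProductSpace ℝ V]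
    [NormedAddCommGroup H] [InnerProductSpace ℝ H]
    (j : V →L[ℝ] H) (hjinj : Function.Injective j) (hjdense : DenseRange j)
    (T : ℝ) (hT : 0 < T)
    (v : ℝ → H) (g : ℝ → StrongDual ℝ V)
    -- `g ∈ L²((0,T), V')`
    (hg : MemLp g 2 ((volume : Measure ℝ).restrict (Ioo 0 T)))
    -- `v ∈ H¹((0,T),V')` with weak time derivative `g`:
    (hweak : ∀ (φ : V) (t₁ t₂ : ℝ), 0 ≤ t₁ → t₁ ≤ t₂ → t₂ ≤ T →
      (inner ℝ (v t₂ - v t₁) (j φ) : ℝ) = ∫ τ in Ioo t₁ t₂, g τ φ)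
    -- `v` takes values in (the image of) `V`:
    (w : ℝ → V) (hv : ∀ t ∈ Icc (0:ℝ) T, v t = j (w t)) :
    ∀ t ∈ Ioo (0:ℝ) T, ∀ s : ℝ, -T < s → s < T → t + s ∈ Ioo (0:ℝ) T →
      ‖v (t + s) - v t‖^2 ≤
        Real.sqrt |s| * ‖w (t + s) - w t‖ * (∫ τ in uIoc t (t + s), ‖g τ‖^2) ^ ((1:ℝ)/2) :=
  nikolskii_estimate_gelfand_triple_squared_general j T v g hg hweak w hv
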